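/- arXiv:1507.05052 — 3 statements merged into one kernel-verified Lean document; each statement's English description precedes it below -/
import Mathlib

section
/- The undirected power graph of a finite group G is complete if and only if G is a cyclic group of prime power order. -/
/-- The undirected power graph of a group: distinct `x`, `y` are adjacent iff
one is a positive power of the other. -/
def powerGraph (G : Type*) [Group G] : SimpleGraph G :=
  SimpleGraph.fromRel (fun x y => ∃ m : ℕ, 0 < m ∧ y = x ^ m)

private lemma mem_zpowers_of_orderOf_dvd {G : Type*} [Group G] [Fintype G] [IsCyclic G]
    {x y : G} (h : orderOf x ∣ orderOf y) : x ∈ Subgroup.zpowers y := by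
  classical
  set d := orderOf y with hd
  have hd0 : 0 < d := orderOf_pos y
  set S : Finset G := Finset.univ.filter (fun a => a ^ d = 1) with hS
  have hle : S.card ≤ d := by
    have := IsCyclic.card_pow_eq_one_le (α := G) hd0
    simpa [hS] using this
  set T : Finset G := Finset.univ.filter (fun a => a ∈ Subgroup.zpowers y) with hT
  have hTS : T ⊆ S := by
    intro a ha
    rw [hT, Finset.mem_filter] at ha
    obtain ⟨k, hk⟩ := mem_powers_iff_mem_zpowers.2 ha.2
    have hk' : y ^ k = a := hk
    rw [hS, Finset.mem_filter]
    refine ⟨Finset.mem_univ a, ?_⟩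
    rw [← hk', ← pow_mul, mul_comm, pow_mul, pow_orderOf_eq_one, one_pow]
  have hTcard : T.card = d := by
    rw [hT, ← Fintype.card_subtype, Fintype.card_zpowers]
  have heq : T = S :=
    Finset.eq_of_subset_of_card_le hTS (by rw [hTcard]; exact hle)
  have hx : x ∈ S := by
    rw [hS, Finset.mem_filter]
    exact ⟨Finset.mem_univ x, orderOf_dvd_iff_pow_eq_one.mp h⟩
  rw [← heq, hT, Finset.mem_filter] at hx
  exact hx.2

private lemma exists_pos_pow_of_mem_zpowers {G : Type*} [Group G] [Fintype G]
    {x y : G} (h : x ∈ Subgroup.zpowers y) : ∃ m : ℕ, 0 < m ∧ x = y ^ m := by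
  obtain ⟨m, hm⟩ := mem_powers_iff_mem_zpowers.2 h
  have hm' : y ^ m = x := hm
  rcases Nat.eq_zero_or_pos m with hm0 | hm0
  · subst hm0
    exact ⟨orderOf y, orderOf_pos y, by rw [pow_orderOf_eq_one, ← hm', pow_zero]⟩
  · exact ⟨m, hm0, hm'.symm⟩

/-- The undirected power graph of a finite group `G` is complete iff `G` is a
cyclic group of prime power order. -/
theorem powerGraph_complete_iff_cyclic_primePow (G : Type*) [Group G] [Fintype G] :
    powerGraph G = ⊤ ↔ IsCyclic G ∧ ∃ p n : ℕ, p.Prime ∧ Fintype.card G = p ^ n := by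
  classical
  have adj_iff : ∀ x y : G, (powerGraph G).Adj x y ↔
      x ≠ y ∧ ((∃ m : ℕ, 0 < m ∧ y = x ^ m) ∨ (∃ m : ℕ, 0 < m ∧ x = y ^ m)) := by
    intro x y
    rfl
  constructor
  · intro hcomp
    have hadj : ∀ x y : G, x ≠ y →
        (∃ m : ℕ, 0 < m ∧ y = x ^ m) ∨ (∃ m : ℕ, 0 < m ∧ x = y ^ m) := by
      intro x y hxy
      have : (powerGraph G).Adj x y := by rw [hcomp]; exact hxy
      exact ((adj_iff x y).1 this).2
    have hcyc : IsCyclic G := by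
      obtain ⟨g, -, hg⟩ := Finset.exists_max_image (Finset.univ : Finset G) orderOf
        ⟨1, Finset.mem_univ 1⟩
      refine ⟨g, fun x => ?_⟩
      by_cases hxg : x = g
      · subst hxg; exact Subgroup.mem_zpowers x
      rcases hadj g x (fun h => hxg h.symm) with ⟨m, -, hm⟩ | ⟨m, -, hm⟩
      · show x ∈ Subgroup.zpowers g
        rw [hm]
        exact Subgroup.npow_mem_zpowers g m
      · -- g = x ^ m, so zpowers g ≤ zpowers x, and orderOf x ≤ orderOf g
        have hgx : g ∈ Subgroup.zpowers x := hm ▸ Subgroup.npow_mem_zpowers x m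
        have hle : Subgroup.zpowers g ≤ Subgroup.zpowers x := Subgroup.zpowers_le.2 hgx
        have hdvd : orderOf g ∣ orderOf x := hm ▸ orderOf_pow_dvd m
        have hord : orderOf g = orderOf x :=
          le_antisymm (Nat.le_of_dvd (orderOf_pos x) hdvd) (hg x (Finset.mem_univ x))
        have heq : Subgroup.zpowers g = Subgroup.zpowers x := by
          apply Subgroup.eq_of_le_of_card_ge hle
          rw [Nat.card_zpowers, Nat.card_zpowers, hord]
        show x ∈ Subgroup.zpowers g
        rw [heq]
        exact Subgroup.mem_zpowers x
    refine ⟨hcyc, ?_⟩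
    by_cases h1 : Fintype.card G = 1
    · exact ⟨2, 0, Nat.prime_two, by rw [h1, pow_zero]⟩
    · set p := (Fintype.card G).minFac with hp
      have hpp : p.Prime := Nat.minFac_prime h1
      have huniq : ∀ {d : ℕ}, d.Prime → d ∣ Fintype.card G → d = p := by
        intro q hq hqd
        by_contra hne
        have : Fact q.Prime := ⟨hq⟩
        have : Fact p.Prime := ⟨hpp⟩
        obtain ⟨x, hx⟩ := exists_prime_orderOf_dvd_card q hqd
        obtain ⟨y, hy⟩ := exists_prime_orderOf_dvd_card p (Fintype.card G).minFac_dvd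
        have hxy : x ≠ y := fun h => hne (by rw [← hx, h, hy])
        rcases hadj x y hxy with ⟨m, -, hm⟩ | ⟨m, -, hm⟩
        · have : orderOf y ∣ orderOf x := hm ▸ orderOf_pow_dvd m
          rw [hx, hy] at this
          exact hne ((Nat.prime_dvd_prime_iff_eq hpp hq).mp this).symm
        · have : orderOf x ∣ orderOf y := hm ▸ orderOf_pow_dvd m
          rw [hx, hy] at this
          exact hne ((Nat.prime_dvd_prime_iff_eq hq hpp).mp this)
      exact ⟨p, _, hpp, Nat.eq_prime_pow_of_unique_prime_dvd Fintype.card_ne_zero huniq⟩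
  · rintro ⟨hcyc, p, n, hp, hcard⟩
    ext x y
    rw [adj_iff]
    simp only [SimpleGraph.top_adj]
    constructor
    · exact fun h => h.1
    · intro hxy
      refine ⟨hxy, ?_⟩
      have hx : orderOf x ∣ p ^ n := hcard ▸ orderOf_dvd_card
      have hy : orderOf y ∣ p ^ n := hcard ▸ orderOf_dvd_card
      obtain ⟨a, -, ha⟩ := (Nat.dvd_prime_pow hp).mp hx
      obtain ⟨b, -, hb⟩ := (Nat.dvd_prime_pow hp).mp hy
      rcases le_total a b with hab | hab
      · right
        apply exists_pos_pow_of_mem_zpowers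
        exact mem_zpowers_of_orderOf_dvd (by rw [ha, hb]; exact pow_dvd_pow p hab)
      · left
        apply exists_pos_pow_of_mem_zpowers
        exact mem_zpowers_of_orderOf_dvd (by rw [ha, hb]; exact pow_dvd_pow p hab)
end

section
/- If the undirected power graph of a finite group G is vertex-transitive, then G is a cyclic p-group. -/
/-- If the power graph of a finite group `G` is vertex-transitive, then `G` is a
cyclic `p`-group. -/
theorem powerGraph_vertexTransitive_imp_cyclic_primePow (G : Type*) [Group G] [Fintype G]
    (htrans : ∀ u v : G, ∃ f : powerGraph G ≃g powerGraph G, f u = v) :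
    IsCyclic G ∧ ∃ p n : ℕ, p.Prime ∧ Fintype.card G = p ^ n := by
  classical
  -- 1 is adjacent to every other vertex
  have hone : ∀ v : G, v ≠ 1 → (powerGraph G).Adj 1 v := by
    intro v hv
    refine ⟨Ne.symm hv, Or.inr ⟨orderOf v, orderOf_pos v, (pow_orderOf_eq_one v).symm⟩⟩
  -- the graph is complete
  have hcomp : ∀ u w : G, u ≠ w → (powerGraph G).Adj u w := by
    intro u w huw
    obtain ⟨f, hf⟩ := htrans 1 u
    obtain ⟨v, hv⟩ : ∃ v, f v = w := ⟨f.symm w, f.apply_symm_apply w⟩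
    have hv1 : v ≠ 1 := by rintro rfl; exact huw (hf ▸ hv ▸ rfl)
    have := f.map_adj_iff.mpr (hone v hv1)
    rwa [hf, hv] at this
  -- comparability
  have hcmp : ∀ u w : G, u ≠ w →
      (∃ m : ℕ, 0 < m ∧ w = u ^ m) ∨ (∃ m : ℕ, 0 < m ∧ u = w ^ m) := by
    intro u w huw
    exact (hcomp u w huw).2
  -- pick element of maximal order
  obtain ⟨x, -, hx⟩ := Finset.exists_max_image (Finset.univ : Finset G) orderOf ⟨1, Finset.mem_univ 1⟩
  have hxmax : ∀ y : G, orderOf y ≤ orderOf x := fun y => hx y (Finset.mem_univ y)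
  have hcyc : IsCyclic G := by
    refine ⟨x, fun y => ?_⟩
    by_cases hyx : y = x
    · exact hyx ▸ Subgroup.mem_zpowers x
    rcases hcmp x y (Ne.symm hyx) with ⟨m, _, rfl⟩ | ⟨m, _, hm⟩
    · exact ⟨m, by simp⟩
    · -- x = y ^ m, so zpowers x ≤ zpowers y, and orders force equality
      have hle : Subgroup.zpowers x ≤ Subgroup.zpowers y := by
        rw [Subgroup.zpowers_le]
        exact hm ▸ ⟨m, by simp⟩
      have hcard : Nat.card (Subgroup.zpowers y) ≤ Nat.card (Subgroup.zpowers x) := by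
        rw [Nat.card_zpowers, Nat.card_zpowers]; exact hxmax y
      have heq := Subgroup.eq_of_le_of_card_ge hle hcard
      have hy : y ∈ Subgroup.zpowers y := Subgroup.mem_zpowers y
      rw [← heq] at hy
      exact hy
  refine ⟨hcyc, ?_⟩
  -- prime power order
  by_cases h1 : Fintype.card G = 1
  · exact ⟨2, 0, Nat.prime_two, by simp [h1]⟩
  have hpos : Fintype.card G ≠ 0 := Fintype.card_ne_zero
  set p := (Fintype.card G).minFac with hp
  have hpprime : p.Prime := Nat.minFac_prime h1
  have huniq : ∀ {d : ℕ}, d.Prime → d ∣ Fintype.card G → d = p := by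
    intro d hd hdvd
    by_contra hne
    have hpdvd : p ∣ Fintype.card G := Nat.minFac_dvd _
    haveI := Fact.mk hd
    haveI := Fact.mk hpprime
    obtain ⟨a, ha⟩ := exists_prime_orderOf_dvd_card d hdvd
    obtain ⟨b, hb⟩ := exists_prime_orderOf_dvd_card p hpdvd
    have hab : a ≠ b := by rintro rfl; exact hne (ha ▸ hb)
    rcases hcmp a b hab with ⟨m, _, rfl⟩ | ⟨m, _, rfl⟩
    · have : orderOf (a ^ m) ∣ orderOf a := orderOf_pow_dvd m
      rw [ha, hb] at this
      exact hne ((Nat.prime_dvd_prime_iff_eq hpprime hd).mp this).symm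
    · have : orderOf (b ^ m) ∣ orderOf b := orderOf_pow_dvd m
      rw [ha, hb] at this
      exact hne ((Nat.prime_dvd_prime_iff_eq hd hpprime).mp this)
  exact ⟨p, _, hpprime, Nat.eq_prime_pow_of_unique_prime_dvd hpos huniq⟩
end

section
/- If every pair of distinct elements of a finite group G satisfies that one is a positive power of the other, then G is cyclic of prime power order. -/
/-- If every pair of distinct elements of a finite group is comparable (one is a
positive power of the other), then the group is cyclic of prime power order. -/
theorem powers_comparable_imp_cyclic_primePow (G : Type*) [Group G] [Fintype G]
    (h : ∀ x y : G, x ≠ y →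
      (∃ m : ℕ, 0 < m ∧ y = x ^ m) ∨ (∃ m : ℕ, 0 < m ∧ x = y ^ m)) :
    IsCyclic G ∧ ∃ p n : ℕ, p.Prime ∧ Fintype.card G = p ^ n := by
  constructor
  · -- cyclic: an element of maximal order generates
    obtain ⟨g, hg⟩ := Finite.exists_max (orderOf : G → ℕ)
    refine ⟨g, fun x => ?_⟩
    by_cases hx : x = g
    · exact hx ▸ Subgroup.mem_zpowers g
    rcases h x g hx with ⟨m, _, hm⟩ | ⟨m, _, hm⟩
    · -- g = x ^ m, so ⟨g⟩ ≤ ⟨x⟩ and orders are equal, so x ∈ ⟨g⟩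
      have hle : Subgroup.zpowers g ≤ Subgroup.zpowers x := by
        rw [Subgroup.zpowers_le]
        exact ⟨(m : ℤ), by simp [hm]⟩
      have hcard : Nat.card (Subgroup.zpowers x) ≤ Nat.card (Subgroup.zpowers g) := by
        rw [Nat.card_zpowers, Nat.card_zpowers]
        exact hg x
      have heq := Subgroup.eq_of_le_of_card_ge hle hcard
      show x ∈ Subgroup.zpowers g
      rw [heq]
      exact Subgroup.mem_zpowers x
    · exact ⟨(m : ℤ), by simp [hm]⟩
  · by_cases h1 : Fintype.card G = 1
    · exact ⟨2, 0, Nat.prime_two, by simp [h1]⟩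
    · have hpos : Fintype.card G ≠ 0 := Fintype.card_ne_zero
      set p := (Fintype.card G).minFac with hp
      have hpprime : p.Prime := Nat.minFac_prime h1
      refine ⟨p, (Fintype.card G).primeFactorsList.length,
        hpprime, Nat.eq_prime_pow_of_unique_prime_dvd hpos ?_⟩
      intro q hq hqd
      by_contra hne
      have : Fact q.Prime := ⟨hq⟩
      have : Fact p.Prime := ⟨hpprime⟩
      obtain ⟨x, hx⟩ := exists_prime_orderOf_dvd_card q hqd
      obtain ⟨y, hy⟩ := exists_prime_orderOf_dvd_card p (Nat.minFac_dvd _)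
      have hxy : x ≠ y := fun e => hne (by rw [← hx, e, hy])
      rcases h x y hxy with ⟨m, _, hm⟩ | ⟨m, _, hm⟩
      · -- y = x ^ m : orderOf y ∣ orderOf x, so p ∣ q
        have : orderOf y ∣ orderOf x := hm ▸ orderOf_pow_dvd m
        rw [hx, hy] at this
        exact hne ((Nat.prime_dvd_prime_iff_eq hpprime hq).mp this).symm
      · have : orderOf x ∣ orderOf y := hm ▸ orderOf_pow_dvd m
        rw [hx, hy] at this
        exact hne ((Nat.prime_dvd_prime_iff_eq hq hpprime).mp this)
end
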